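/- arXiv:1403.7062 — 7 statements merged into one kernel-verified Lean document; each statement's English description precedes it below -/
import Mathlib

section
/- The limit of -x · ln_q(x) as x tends to 0 from the right equals 0 if and only if q > 0. -/
/-!
For `q ≠ 1` and `x > 0` one has `-x · ln_q x = (x^q - x)/(1 - q)`. If `q > 0` both `x^q` and `x`
tend to `0` (and for `q = 1` this is the continuity of `x ↦ -x log x` at `0`). If `q ≤ 0` then
`x^q ≥ 1` on `(0, 1]`, so `-x · ln_q x ≥ (1 - x)/(1 - q)`, which tends to `1/(1 - q) > 0`.
-/

open Real Filter Topology

/-- The deformed logarithm (q-logarithm): `ln_q x = (x^(q-1) - 1)/(q-1)` for `q ≠ 1`,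
and `ln x` for `q = 1`. -/
noncomputable def lnq (q x : ℝ) : ℝ := if q = 1 then Real.log x else (x ^ (q - 1) - 1) / (q - 1)

lemma neg_mul_lnq_one (x : ℝ) : -(x * lnq 1 x) = negMulLog x := by
  simp [lnq, negMulLog]

lemma neg_mul_lnq_of_ne_one {q x : ℝ} (hq : q ≠ 1) (hx : 0 < x) :
    -(x * lnq q x) = (x ^ q - x) / (1 - q) := by
  have hpow : x * x ^ (q - 1) = x ^ q := by
    rw [mul_comm, ← rpow_add_one hx.ne', sub_add_cancel]
  have hq' : q - 1 ≠ 0 := sub_ne_zero.mpr hq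
  have hq'' : 1 - q ≠ 0 := sub_ne_zero.mpr hq.symm
  rw [lnq, if_neg hq, ← mul_div_assoc, mul_sub, hpow, mul_one]
  field_simp
  ring

lemma div_le_neg_mul_lnq_of_nonpos {q x : ℝ} (hq : q ≤ 0) (hx₀ : 0 < x) (hx₁ : x ≤ 1) :
    (1 - x) / (1 - q) ≤ -(x * lnq q x) := by
  rw [neg_mul_lnq_of_ne_one (by linarith) hx₀]
  have : 0 ≤ 1 - q := by linarith
  gcongr
  exact one_le_rpow_of_pos_of_le_one_of_nonpos hx₀ hx₁ hq

lemma tendsto_neg_mul_lnq_of_pos {q : ℝ} (hq : 0 < q) :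
    Tendsto (fun x => -(x * lnq q x)) (𝓝[>] 0) (𝓝 0) := by
  rcases eq_or_ne q 1 with rfl | hq1
  · simpa only [neg_mul_lnq_one, negMulLog_zero] using
      (continuous_negMulLog.tendsto 0).mono_left nhdsWithin_le_nhds
  · have hlim : Tendsto (fun x : ℝ => (x ^ q - x) / (1 - q)) (𝓝 0) (𝓝 0) := by
      simpa [zero_rpow hq.ne'] using
        ((continuousAt_rpow_const 0 q (Or.inr hq.le)).tendsto.sub tendsto_id).div_const (1 - q)
    refine (hlim.mono_left nhdsWithin_le_nhds).congr' ?_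
    filter_upwards [self_mem_nhdsWithin] with x hx using (neg_mul_lnq_of_ne_one hq1 hx).symm

lemma not_tendsto_neg_mul_lnq_of_nonpos {q : ℝ} (hq : q ≤ 0) :
    ¬Tendsto (fun x => -(x * lnq q x)) (𝓝[>] 0) (𝓝 0) := by
  intro h
  have hlow : Tendsto (fun x : ℝ => (1 - x) / (1 - q)) (𝓝[>] 0) (𝓝 ((1 - 0) / (1 - q))) :=
    (by fun_prop : Continuous fun x : ℝ => (1 - x) / (1 - q)).continuousWithinAt
  have hle : (1 - 0) / (1 - q) ≤ 0 := le_of_tendsto_of_tendsto hlow h <| by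
    filter_upwards [Ioo_mem_nhdsGT zero_lt_one] with x hx
    exact div_le_neg_mul_lnq_of_nonpos hq hx.1 hx.2.le
  have : 0 < (1 - 0) / (1 - q) := div_pos (by norm_num) (by linarith)
  linarith

theorem tendsto_neg_mul_lnq_iff (q : ℝ) :
    Filter.Tendsto (fun x : ℝ => -(x * lnq q x)) (nhdsWithin 0 (Set.Ioi 0)) (nhds 0) ↔ 0 < q :=
  ⟨fun h => not_le.mp fun hq => not_tendsto_neg_mul_lnq_of_nonpos hq h, tendsto_neg_mul_lnq_of_pos⟩
end

section
/- Let q ≥ 1 and let a, b, c, d ≥ 0 with a + b + c + d = 1. Then (a+b)^q + (c+d)^q + (a+c)^q + (b+d)^q ≤ 1 + a^q + b^q + c^q + d^q. -/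
/-!
Write `(a, b) = p • (u₁, v₁)` and `(c, d) = r • (u₂, v₂)` with `p = a + b`, `r = c + d` and
`u₁ + v₁ = u₂ + v₂ = 1`. Convexity of `t ↦ t ^ q` bounds `(a + c) ^ q + (b + d) ^ q` by
`p F₁ + r F₂`, where `Fᵢ = uᵢ ^ q + vᵢ ^ q ≤ 1`, while the right-hand side equals
`1 + p ^ q F₁ + r ^ q F₂`. The remaining inequality is
`(p - p ^ q) (1 - F₁) + (r - r ^ q) (1 - F₂) ≥ 0`.
-/

open Real Set

lemma exists_weights_eq_add_mul {a b : ℝ} (ha : 0 ≤ a) (hb : 0 ≤ b) :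
    ∃ u v : ℝ, 0 ≤ u ∧ 0 ≤ v ∧ u + v = 1 ∧ a = (a + b) * u ∧ b = (a + b) * v := by
  rcases (add_nonneg ha hb).eq_or_lt with hab | hab
  · exact ⟨1, 0, zero_le_one, le_rfl, add_zero 1, by linarith, by linarith⟩
  · refine ⟨a / (a + b), b / (a + b), by positivity, by positivity, ?_, ?_, ?_⟩
    · rw [← add_div, div_self hab.ne']
    all_goals field_simp

lemma rpow_add_rpow_le_one {q u v : ℝ} (hq : 1 ≤ q) (hu : 0 ≤ u) (hv : 0 ≤ v)
    (huv : u + v = 1) : u ^ q + v ^ q ≤ 1 := by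
  simpa [huv] using Real.add_rpow_le_rpow_add hu hv hq

lemma rpow_convex_comb_le {q u v l m : ℝ} (hq : 1 ≤ q) (hu : 0 ≤ u) (hv : 0 ≤ v)
    (hl : 0 ≤ l) (hm : 0 ≤ m) (hlm : l + m = 1) :
    (l * u + m * v) ^ q ≤ l * u ^ q + m * v ^ q := by
  simpa only [smul_eq_mul] using (convexOn_rpow hq).2 (mem_Ici.2 hu) (mem_Ici.2 hv) hl hm hlm

lemma tsallis_two_bits_of_weights {q p r u₁ v₁ u₂ v₂ : ℝ} (hq : 1 ≤ q)
    (hp : 0 ≤ p) (hr : 0 ≤ r) (hpr : p + r = 1)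
    (hu₁ : 0 ≤ u₁) (hv₁ : 0 ≤ v₁) (huv₁ : u₁ + v₁ = 1)
    (hu₂ : 0 ≤ u₂) (hv₂ : 0 ≤ v₂) (huv₂ : u₂ + v₂ = 1) :
    p ^ q + r ^ q + (p * u₁ + r * u₂) ^ q + (p * v₁ + r * v₂) ^ q ≤
      1 + (p * u₁) ^ q + (p * v₁) ^ q + (r * u₂) ^ q + (r * v₂) ^ q := by
  have hx := rpow_convex_comb_le hq hu₁ hu₂ hp hr hpr
  have hy := rpow_convex_comb_le hq hv₁ hv₂ hp hr hpr
  have hF₁ := rpow_add_rpow_le_one hq hu₁ hv₁ huv₁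
  have hF₂ := rpow_add_rpow_le_one hq hu₂ hv₂ huv₂
  have hpq : p ^ q ≤ p := rpow_le_self_of_le_one hp (by linarith) hq
  have hrq : r ^ q ≤ r := rpow_le_self_of_le_one hr (by linarith) hq
  rw [mul_rpow hp hu₁, mul_rpow hp hv₁, mul_rpow hr hu₂, mul_rpow hr hv₂]
  nlinarith [mul_nonneg (sub_nonneg.2 hpq) (sub_nonneg.2 hF₁),
    mul_nonneg (sub_nonneg.2 hrq) (sub_nonneg.2 hF₂)]

theorem tsallis_subadditivity_two_bits (q a b c d : ℝ) (hq : 1 ≤ q)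
    (ha : 0 ≤ a) (hb : 0 ≤ b) (hc : 0 ≤ c) (hd : 0 ≤ d) (hsum : a + b + c + d = 1) :
    (a + b) ^ q + (c + d) ^ q + (a + c) ^ q + (b + d) ^ q ≤
      1 + a ^ q + b ^ q + c ^ q + d ^ q := by
  obtain ⟨u₁, v₁, hu₁, hv₁, huv₁, hau, hbv⟩ := exists_weights_eq_add_mul ha hb
  obtain ⟨u₂, v₂, hu₂, hv₂, huv₂, hcu, hdv⟩ := exists_weights_eq_add_mul hc hd
  have h := tsallis_two_bits_of_weights hq (add_nonneg ha hb) (add_nonneg hc hd)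
    (by linarith) hu₁ hv₁ huv₁ hu₂ hv₂ huv₂
  rwa [← hau, ← hbv, ← hcu, ← hdv] at h
end

section
/- Let q > 1 and let X = Diag(a,b,c,d) with a,b,c,d ≥ 0 summing to 1, viewed as a state on C^2 ⊗ C^2 with marginals D1 = Diag(a+b, c+d) and D2 = Diag(a+c, b+d). Then S_q(D) ≤ S_q(D1) + S_q(D2), where S_q(Diag(p_1,...,p_n)) = -Σ_i p_i · ln_q(p_i). -/
/-- The Tsallis entropy of a finite probability vector `p`: `S_q(p) = -∑ i, p i * ln_q (p i)`. -/
noncomputable def tsallisEntropyVec (q : ℝ) {ι : Type*} [Fintype ι] (p : ι → ℝ) : ℝ :=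
  -∑ i, p i * lnq q (p i)

/-!
Write `r i` and `c j` for the row and column sums of a joint distribution `p`; for `q > 1` the
claim amounts to `∑ i, r i ^ q + ∑ j, c j ^ q ≤ 1 + ∑ i, ∑ j, p (i, j) ^ q`. Jensen's inequality
gives `c j ^ q ≤ ∑ i, r i ^ (1 - q) * p (i, j) ^ q`. Since `P i := ∑ j, p (i, j) ^ q ≤ r i ^ q`
(superadditivity of `t ↦ t ^ q`) and `r i ^ (1 - q) ≥ 1`, also
`r i ^ (1 - q) * P i ≤ P i + r i - r i ^ q`, and summing over `i` gives the claim.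
-/

open Finset Real

lemma mul_lnq_eq {q x : ℝ} (hq₀ : q ≠ 0) (hq₁ : q ≠ 1) (hx : 0 ≤ x) :
    x * lnq q x = (x ^ q - x) / (q - 1) := by
  have hxq : x ^ q = x * x ^ (q - 1) := by
    simpa using rpow_add' hx (show 1 + (q - 1) ≠ 0 by simpa using hq₀)
  rw [lnq, if_neg hq₁, hxq]
  ring

lemma tsallisEntropyVec_eq {q : ℝ} (hq₀ : q ≠ 0) (hq₁ : q ≠ 1) {ι : Type*} [Fintype ι]
    {p : ι → ℝ} (hp : ∀ i, 0 ≤ p i) (hsum : ∑ i, p i = 1) :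
    tsallisEntropyVec q p = (1 - ∑ i, p i ^ q) / (q - 1) := by
  simp only [tsallisEntropyVec, mul_lnq_eq hq₀ hq₁ (hp _), ← sum_div, sum_sub_distrib, hsum]
  ring

lemma tsallisEntropyVec_comp_equiv (q : ℝ) {ι κ : Type*} [Fintype ι] [Fintype κ] (e : ι ≃ κ)
    (p : κ → ℝ) : tsallisEntropyVec q (p ∘ e) = tsallisEntropyVec q p := by
  simp only [tsallisEntropyVec, Function.comp_apply, e.sum_comp (fun k => p k * lnq q (p k))]

lemma Real.sum_rpow_le_rpow_sum {ι : Type*} (s : Finset ι) {f : ι → ℝ} (hf : ∀ i ∈ s, 0 ≤ f i)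
    {q : ℝ} (hq : 1 ≤ q) : ∑ i ∈ s, f i ^ q ≤ (∑ i ∈ s, f i) ^ q := by
  classical
  induction s using Finset.induction_on with
  | empty => simp [zero_rpow (by positivity : q ≠ 0)]
  | insert a s ha ih =>
    rw [sum_insert ha, sum_insert ha]
    have hfa : 0 ≤ f a := hf a (mem_insert_self a s)
    have hfs : ∀ i ∈ s, 0 ≤ f i := fun i hi => hf i (mem_insert_of_mem hi)
    calc f a ^ q + ∑ i ∈ s, f i ^ q ≤ f a ^ q + (∑ i ∈ s, f i) ^ q := by gcongr; exact ih hfs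
      _ ≤ (f a + ∑ i ∈ s, f i) ^ q := add_rpow_le_rpow_add hfa (sum_nonneg hfs) hq

/-- Jensen's inequality for `t ↦ t ^ q` at the points `x i / w i`, cleared of denominators so
that vanishing weights are allowed. -/
lemma Real.rpow_sum_le_sum_rpow_one_sub_mul {ι : Type*} (s : Finset ι) {w x : ι → ℝ}
    (hw : ∀ i ∈ s, 0 ≤ w i) (hw₁ : ∑ i ∈ s, w i = 1) (hx : ∀ i ∈ s, 0 ≤ x i)
    (hxw : ∀ i ∈ s, w i = 0 → x i = 0) {q : ℝ} (hq : 1 ≤ q) :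
    (∑ i ∈ s, x i) ^ q ≤ ∑ i ∈ s, w i ^ (1 - q) * x i ^ q := by
  have jensen := rpow_arith_mean_le_arith_mean_rpow s w (fun i => x i / w i) hw hw₁
    (fun i hi => div_nonneg (hx i hi) (hw i hi)) hq
  have hq₀ : q ≠ 0 := by positivity
  have hmean : ∑ i ∈ s, w i * (x i / w i) = ∑ i ∈ s, x i := by
    refine sum_congr rfl fun i hi => ?_
    rcases (hw i hi).eq_or_lt with hwi | hwi
    · simp [← hwi, hxw i hi hwi.symm]
    · field_simp
  have hpow : ∑ i ∈ s, w i * (x i / w i) ^ q = ∑ i ∈ s, w i ^ (1 - q) * x i ^ q := by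
    refine sum_congr rfl fun i hi => ?_
    rcases (hw i hi).eq_or_lt with hwi | hwi
    · simp [← hwi, hxw i hi hwi.symm, zero_rpow hq₀]
    · rw [div_rpow (hx i hi) hwi.le, rpow_sub hwi, rpow_one]
      field_simp
  rwa [hmean, hpow] at jensen

lemma Real.rpow_one_sub_mul_le_add_sub_rpow {q r P : ℝ} (hq : 1 ≤ q) (hr₀ : 0 ≤ r) (hr₁ : r ≤ 1)
    (hP₀ : 0 ≤ P) (hP : P ≤ r ^ q) : r ^ (1 - q) * P ≤ P + r - r ^ q := by
  rcases hr₀.eq_or_lt with rfl | hr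
  · have : P = 0 := le_antisymm (hP.trans_eq (zero_rpow (by positivity))) hP₀
    simp [this, zero_rpow (by positivity : q ≠ 0)]
  have hone : 1 ≤ r ^ (1 - q) := one_le_rpow_of_pos_of_le_one_of_nonpos hr hr₁ (by linarith)
  have hr_eq : r ^ (1 - q) * r ^ q = r := by rw [← rpow_add hr]; simp
  nlinarith [mul_le_mul_of_nonneg_left hP (sub_nonneg.2 hone)]

section Marginals

variable {ι κ : Type*} [Fintype ι] [Fintype κ]

lemma sum_rpow_marginals_le {q : ℝ} (hq : 1 ≤ q) {p : ι × κ → ℝ} (hp : ∀ x, 0 ≤ p x)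
    (hsum : ∑ x, p x = 1) :
    ∑ i, (∑ j, p (i, j)) ^ q + ∑ j, (∑ i, p (i, j)) ^ q ≤ 1 + ∑ i, ∑ j, p (i, j) ^ q := by
  set r : ι → ℝ := fun i => ∑ j, p (i, j)
  have hr₀ : ∀ i, 0 ≤ r i := fun i => sum_nonneg fun j _ => hp (i, j)
  have hr₁ : ∑ i, r i = 1 := by rw [← hsum, Fintype.sum_prod_type]
  have column (j : κ) : (∑ i, p (i, j)) ^ q ≤ ∑ i, r i ^ (1 - q) * p (i, j) ^ q :=
    rpow_sum_le_sum_rpow_one_sub_mul _ (fun i _ => hr₀ i) hr₁ (fun i _ => hp _)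
      (fun i _ hri => (sum_eq_zero_iff_of_nonneg fun j _ => hp (i, j)).1 hri j (mem_univ j)) hq
  have row (i : ι) : r i ^ (1 - q) * ∑ j, p (i, j) ^ q ≤ ∑ j, p (i, j) ^ q + r i - r i ^ q :=
    rpow_one_sub_mul_le_add_sub_rpow hq (hr₀ i)
      (hr₁ ▸ single_le_sum (fun i _ => hr₀ i) (mem_univ i))
      (sum_nonneg fun j _ => by have := hp (i, j); positivity)
      (sum_rpow_le_rpow_sum _ (fun j _ => hp (i, j)) hq)
  calc ∑ i, r i ^ q + ∑ j, (∑ i, p (i, j)) ^ q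
      ≤ ∑ i, r i ^ q + ∑ i, r i ^ (1 - q) * ∑ j, p (i, j) ^ q := by
        gcongr
        refine (sum_le_sum fun j _ => column j).trans_eq ?_
        rw [sum_comm]; simp only [mul_sum]
    _ ≤ ∑ i, r i ^ q + ∑ i, (∑ j, p (i, j) ^ q + r i - r i ^ q) := by gcongr with i; exact row i
    _ = 1 + ∑ i, ∑ j, p (i, j) ^ q := by simp only [sum_sub_distrib, sum_add_distrib, hr₁]; ring

theorem tsallisEntropyVec_le_add_marginals {q : ℝ} (hq : 1 < q) {p : ι × κ → ℝ}
    (hp : ∀ x, 0 ≤ p x) (hsum : ∑ x, p x = 1) :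
    tsallisEntropyVec q p ≤ tsallisEntropyVec q (fun i => ∑ j, p (i, j)) +
      tsallisEntropyVec q (fun j => ∑ i, p (i, j)) := by
  have hq₀ : q ≠ 0 := by positivity
  have hq₁ : q ≠ 1 := hq.ne'
  have hsum' := hsum
  rw [Fintype.sum_prod_type] at hsum'
  rw [tsallisEntropyVec_eq hq₀ hq₁ hp hsum,
    tsallisEntropyVec_eq hq₀ hq₁ (fun i => sum_nonneg fun j _ => hp (i, j)) hsum',
    tsallisEntropyVec_eq hq₀ hq₁ (fun j => sum_nonneg fun i _ => hp (i, j)) (by rwa [sum_comm]),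
    ← add_div, div_le_div_iff_of_pos_right (by linarith), Fintype.sum_prod_type]
  linarith [sum_rpow_marginals_le hq.le hp hsum]

end Marginals

/-- Subadditivity of the Tsallis entropy for the diagonal state `D = Diag(a,b,c,d)` on
`ℂ² ⊗ ℂ²`, with marginals `D₁ = Diag(a+b, c+d)` and `D₂ = Diag(a+c, b+d)`. -/
theorem tsallis_subadditive_diag (q a b c d : ℝ) (hq : 1 < q)
    (ha : 0 ≤ a) (hb : 0 ≤ b) (hc : 0 ≤ c) (hd : 0 ≤ d) (hsum : a + b + c + d = 1) :
    tsallisEntropyVec q (![a, b, c, d]) ≤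
      tsallisEntropyVec q (![a + b, c + d]) + tsallisEntropyVec q (![a + c, b + d]) := by
  -- `finProdFinEquiv` lists `Fin 2 × Fin 2` row by row, so `p` is the matrix `!![a, b; c, d]`.
  set p := ![a, b, c, d] ∘ (finProdFinEquiv : Fin 2 × Fin 2 ≃ Fin 4)
  have hp : ∀ x, 0 ≤ p x := by
    rintro ⟨i, j⟩; fin_cases i <;> fin_cases j <;> assumption
  have hp₁ : ∑ x, p x = 1 := by
    rw [Fintype.sum_prod_type]
    simp only [Fin.sum_univ_two]
    change a + b + (c + d) = 1
    linarith
  have hrows : (fun i => ∑ j, p (i, j)) = ![a + b, c + d] := by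
    ext i; fin_cases i <;> simp [p, Fin.sum_univ_two] <;> rfl
  have hcols : (fun j => ∑ i, p (i, j)) = ![a + c, b + d] := by
    ext j; fin_cases j <;> simp [p, Fin.sum_univ_two] <;> rfl
  have key := tsallisEntropyVec_le_add_marginals hq hp hp₁
  rwa [hrows, hcols, tsallisEntropyVec_comp_equiv] at key
end

section
/- Fix q > 1. Let ρ_123 be the 8×8 density matrix on C^2 ⊗ C^2 ⊗ C^2 with entries ρ[3,3] = ρ[3,5] = ρ[5,3] = ρ[5,5] = ρ[4,4] = ρ[4,6] = ρ[6,4] = ρ[6,6] = 1/4 (1-based indexing) and all other entries zero. Then its reduced states satisfy S_q(ρ_123) + S_q(ρ_2) > S_q(ρ_12) + S_q(ρ_23), i.e., the strong subadditivity of the Tsallis entropy fails; explicitly, (2 - 4·(1/2)^q)/(q-1) > (1 - 4·(1/4)^q)/(q-1). -/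
open Matrix Kronecker ComplexOrder

/-- Tsallis entropy `S_q(ρ) = -Tr(ρ ln_q ρ)` of a Hermitian matrix, computed from eigenvalues. -/
noncomputable def tsallisEntropy (q : ℝ) {n : Type*} [Fintype n] [DecidableEq n]
    {ρ : Matrix n n ℂ} (hρ : ρ.IsHermitian) : ℝ :=
  -∑ i, hρ.eigenvalues i * lnq q (hρ.eigenvalues i)

/-- Partial trace over the third tensor factor. -/
noncomputable def ptrace3 {ι1 ι2 ι3 : Type*} [Fintype ι3]
    (A : Matrix (ι1 × ι2 × ι3) (ι1 × ι2 × ι3) ℂ) : Matrix (ι1 × ι2) (ι1 × ι2) ℂ :=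
  fun x y => ∑ k, A (x.1, x.2, k) (y.1, y.2, k)

/-- Partial trace over the first tensor factor. -/
noncomputable def ptrace1 {ι1 ι2 ι3 : Type*} [Fintype ι1]
    (A : Matrix (ι1 × ι2 × ι3) (ι1 × ι2 × ι3) ℂ) : Matrix (ι2 × ι3) (ι2 × ι3) ℂ :=
  fun x y => ∑ i, A (i, x.1, x.2) (i, y.1, y.2)

/-- Partial trace over the first and third tensor factors. -/
noncomputable def ptrace13 {ι1 ι2 ι3 : Type*} [Fintype ι1] [Fintype ι3]
    (A : Matrix (ι1 × ι2 × ι3) (ι1 × ι2 × ι3) ℂ) : Matrix ι2 ι2 ℂ :=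
  fun x y => ∑ i, ∑ k, A (i, x, k) (i, y, k)

/-- The 8×8 counterexample density matrix: in 1-based indexing, the entries
`ρ[3,3] = ρ[3,5] = ρ[5,3] = ρ[5,5] = ρ[4,4] = ρ[4,6] = ρ[6,4] = ρ[6,6] = 1/4`
(positions `n` corresponding to triples via `n - 1 = 4i + 2j + k`), all others zero. -/
noncomputable def ρcex : Matrix (Fin 2 × Fin 2 × Fin 2) (Fin 2 × Fin 2 × Fin 2) ℂ :=
  fun x y =>
    if ((x = (0, 1, 0) ∨ x = (1, 0, 0)) ∧ (y = (0, 1, 0) ∨ y = (1, 0, 0))) ∨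
       ((x = (0, 1, 1) ∨ x = (1, 0, 1)) ∧ (y = (0, 1, 1) ∨ y = (1, 0, 1))) then (1 / 4 : ℂ)
    else 0

/-!
Each of the four states `M` is a uniform mixture over its support: `M * M = c • M` and
`trace M = 1`, so its eigenvalues lie in `{0, c}`, the eigenvalue `c` carries all the weight,
and `S_q(M) = -ln_q c`. Here `c = 1/2, 1, 1/4, 1/2` for `ρ_123, ρ_12, ρ_23, ρ_2`, and with
`y = (1/2)^q` the violation `S_q(ρ_123) + S_q(ρ_2) - S_q(ρ_12) - S_q(ρ_23)` equals
`(1 - 2y)^2 / (q - 1) > 0`.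
-/

lemma Matrix.IsHermitian.eigenvalues_eq_zero_or_eq_of_mul_self_eq_smul {𝕜 n : Type*} [RCLike 𝕜]
    [Fintype n] [DecidableEq n] {M : Matrix n n 𝕜} (hM : M.IsHermitian) {c : ℝ}
    (hMc : M * M = c • M) (i : n) : hM.eigenvalues i = 0 ∨ hM.eigenvalues i = c := by
  set v := ⇑(hM.eigenvectorBasis i)
  have hv : v ≠ 0 := fun h =>
    hM.eigenvectorBasis.orthonormal.ne_zero i (by ext j; exact congrFun h j)
  have hMv : M *ᵥ v = hM.eigenvalues i • v := hM.mulVec_eigenvectorBasis i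
  have hsq : (hM.eigenvalues i * hM.eigenvalues i) • v = (c * hM.eigenvalues i) • v := by
    calc (hM.eigenvalues i * hM.eigenvalues i) • v = M *ᵥ (M *ᵥ v) := by
          rw [hMv, mulVec_smul, hMv, smul_smul]
      _ = (c * hM.eigenvalues i) • v := by
          rw [mulVec_mulVec, hMc, smul_mulVec, hMv, smul_smul]
  exact (mul_eq_mul_right_iff.mp (smul_left_injective ℝ hv hsq)).symm

lemma lnq_of_ne_one {q : ℝ} (hq : q ≠ 1) {c : ℝ} (hc : c ≠ 0) :
    lnq q c = (c⁻¹ * c ^ q - 1) / (q - 1) := by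
  rw [lnq, if_neg hq, Real.rpow_sub_one hc]
  ring

lemma tsallisEntropy_eq_neg_lnq_of_mul_self_eq_smul (q : ℝ) {n : Type*} [Fintype n]
    [DecidableEq n] {M : Matrix n n ℂ} (hM : M.IsHermitian) {c : ℝ} (hMc : M * M = c • M)
    (htr : M.trace = 1) : tsallisEntropy q hM = -lnq q c := by
  have hsum : ∑ i, hM.eigenvalues i = 1 := by
    have h := hM.trace_eq_sum_eigenvalues.symm.trans htr
    rw [← RCLike.ofReal_sum] at h
    exact RCLike.ofReal_inj.mp (h.trans RCLike.ofReal_one.symm)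
  have hterm (i : n) : hM.eigenvalues i * lnq q (hM.eigenvalues i) =
      hM.eigenvalues i * lnq q c := by
    rcases hM.eigenvalues_eq_zero_or_eq_of_mul_self_eq_smul hMc i with h | h <;> simp [h]
  simp only [tsallisEntropy, hterm, ← Finset.sum_mul, hsum, one_mul]

lemma one_sub_four_mul_quarter_rpow_lt {q : ℝ} (hq : q ≠ 1) :
    1 - 4 * (1 / 4 : ℝ) ^ q < 2 - 4 * (1 / 2 : ℝ) ^ q := by
  have hne : (1 / 2 : ℝ) ^ q ≠ 1 / 2 := by
    simpa using hq ∘ (Real.rpow_right_inj (x := 1 / 2) (z := 1) (by norm_num) (by norm_num)).mp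
  have hquarter : (1 / 4 : ℝ) ^ q = (1 / 2 : ℝ) ^ q * (1 / 2 : ℝ) ^ q := by
    rw [← Real.mul_rpow (by norm_num) (by norm_num)]; norm_num
  nlinarith [sq_pos_of_ne_zero (sub_ne_zero.mpr hne)]

lemma ρcex_mul_self : ρcex * ρcex = (1 / 2 : ℝ) • ρcex := by
  ext ⟨a, b, c⟩ ⟨d, e, f⟩
  simp only [mul_apply, Fintype.sum_prod_type, Fin.sum_univ_two, ρcex, Matrix.smul_apply,
    Complex.real_smul, Prod.mk.injEq]
  fin_cases a <;> fin_cases b <;> fin_cases c <;> fin_cases d <;> fin_cases e <;> fin_cases f <;>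
    norm_num

lemma ρcex_trace : ρcex.trace = 1 := by
  simp only [trace, diag, Fintype.sum_prod_type, Fin.sum_univ_two, ρcex, Prod.mk.injEq]
  norm_num

lemma ptrace3_ρcex_mul_self : ptrace3 ρcex * ptrace3 ρcex = (1 : ℝ) • ptrace3 ρcex := by
  ext ⟨a, b⟩ ⟨d, e⟩
  simp only [mul_apply, Fintype.sum_prod_type, Fin.sum_univ_two, ρcex, ptrace3, Matrix.smul_apply,
    Complex.real_smul, Prod.mk.injEq]
  fin_cases a <;> fin_cases b <;> fin_cases d <;> fin_cases e <;> norm_num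

lemma ptrace3_ρcex_trace : (ptrace3 ρcex).trace = 1 := by
  simp only [trace, diag, Fintype.sum_prod_type, Fin.sum_univ_two, ρcex, ptrace3, Prod.mk.injEq]
  norm_num

lemma ptrace1_ρcex_mul_self : ptrace1 ρcex * ptrace1 ρcex = (1 / 4 : ℝ) • ptrace1 ρcex := by
  ext ⟨a, b⟩ ⟨d, e⟩
  simp only [mul_apply, Fintype.sum_prod_type, Fin.sum_univ_two, ρcex, ptrace1, Matrix.smul_apply,
    Complex.real_smul, Prod.mk.injEq]
  fin_cases a <;> fin_cases b <;> fin_cases d <;> fin_cases e <;> norm_num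

lemma ptrace1_ρcex_trace : (ptrace1 ρcex).trace = 1 := by
  simp only [trace, diag, Fintype.sum_prod_type, Fin.sum_univ_two, ρcex, ptrace1, Prod.mk.injEq]
  norm_num

lemma ptrace13_ρcex_mul_self : ptrace13 ρcex * ptrace13 ρcex = (1 / 2 : ℝ) • ptrace13 ρcex := by
  ext a d
  simp only [mul_apply, Fin.sum_univ_two, ρcex, ptrace13, Matrix.smul_apply, Complex.real_smul,
    Prod.mk.injEq]
  fin_cases a <;> fin_cases d <;> norm_num

lemma ptrace13_ρcex_trace : (ptrace13 ρcex).trace = 1 := by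
  simp only [trace, diag, Fin.sum_univ_two, ρcex, ptrace13, Prod.mk.injEq]
  norm_num

/-- Failure of strong subadditivity of the Tsallis entropy for every `q > 1`. -/
theorem tsallis_ssa_fails (q : ℝ) (hq : 1 < q)
    (h123 : ρcex.IsHermitian) (h12 : (ptrace3 ρcex).IsHermitian)
    (h23 : (ptrace1 ρcex).IsHermitian) (h2 : (ptrace13 ρcex).IsHermitian) :
    tsallisEntropy q h123 + tsallisEntropy q h2 >
        tsallisEntropy q h12 + tsallisEntropy q h23 ∧
      (2 - 4 * (1 / 2 : ℝ) ^ q) / (q - 1) > (1 - 4 * (1 / 4 : ℝ) ^ q) / (q - 1) := by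
  have hq1 : q ≠ 1 := hq.ne'
  have explicit : (2 - 4 * (1 / 2 : ℝ) ^ q) / (q - 1) > (1 - 4 * (1 / 4 : ℝ) ^ q) / (q - 1) :=
    div_lt_div_of_pos_right (one_sub_four_mul_quarter_rpow_lt hq1) (sub_pos.mpr hq)
  refine ⟨?_, explicit⟩
  rw [tsallisEntropy_eq_neg_lnq_of_mul_self_eq_smul q h123 ρcex_mul_self ρcex_trace,
    tsallisEntropy_eq_neg_lnq_of_mul_self_eq_smul q h2 ptrace13_ρcex_mul_self ptrace13_ρcex_trace,
    tsallisEntropy_eq_neg_lnq_of_mul_self_eq_smul q h12 ptrace3_ρcex_mul_self ptrace3_ρcex_trace,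
    tsallisEntropy_eq_neg_lnq_of_mul_self_eq_smul q h23 ptrace1_ρcex_mul_self ptrace1_ρcex_trace,
    lnq_of_ne_one hq1 (c := 1 / 2) (by norm_num), lnq_of_ne_one hq1 (c := 1 / 4) (by norm_num),
    lnq_of_ne_one hq1 one_ne_zero, Real.one_rpow]
  convert explicit using 1 <;> ring
end

section
/- Let q > 1. Suppose ρ_12 is a pure state on H_1 ⊗ H_2 whose reduced state ρ_2 has S_q(ρ_2) > 0 (i.e., ρ_12 is entangled), and let ρ_3 be a density matrix with rank at least 2 (so S_q(ρ_3) > 0). Then for ρ_123 = ρ_12 ⊗ ρ_3, the strict inequality S_q(ρ_123) + S_q(ρ_2) > S_q(ρ_12) + S_q(ρ_23) holds. -/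
open Matrix Kronecker ComplexOrder

/-- Partial trace over the first tensor factor. -/
noncomputable def ptraceFst {ι1 ι2 : Type*} [Fintype ι1]
    (A : Matrix (ι1 × ι2) (ι1 × ι2) ℂ) : Matrix ι2 ι2 ℂ :=
  fun k l => ∑ i, A (i, k) (i, l)

/-! For density matrices the Tsallis entropy is pseudo-additive on Kronecker products,
`S_q(A ⊗ B) = S_q(A) + S_q(B) + (1 - q) S_q(A) S_q(B)`: the spectrum of `A ⊗ B` consists of the
products `a b` of eigenvalues, and `ln_q (a b) = ln_q a + ln_q b + (q - 1) ln_q a ln_q b`.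
A pure `ρ_12` has `S_q(ρ_12) = 0`, so `S_q(ρ_123) = S_q(ρ_3)`, and the two sides of the inequality
differ by `(q - 1) S_q(ρ_2) S_q(ρ_3)`. This is positive because `S_q(ρ_3) > 0`: a density matrix
of rank at least two has an eigenvalue strictly between `0` and `1`, where `ln_q` is negative. -/

theorem lnq_one (q : ℝ) : lnq q 1 = 0 := by
  simp [lnq]

theorem lnq_neg {q x : ℝ} (hx0 : 0 < x) (hx1 : x < 1) : lnq q x < 0 := by
  unfold lnq
  split_ifs with hq
  · exact Real.log_neg hx0 hx1
  rcases lt_or_gt_of_ne hq with hq | hq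
  · exact div_neg_of_pos_of_neg
      (sub_pos.2 (Real.one_lt_rpow_of_pos_of_lt_one_of_neg hx0 hx1 (by linarith)))
      (by linarith)
  · exact div_neg_of_neg_of_pos
      (sub_neg.2 (Real.rpow_lt_one hx0.le hx1 (by linarith))) (by linarith)

theorem lnq_mul (q : ℝ) {a b : ℝ} (ha : 0 < a) (hb : 0 < b) :
    lnq q (a * b) = lnq q a + lnq q b + (q - 1) * lnq q a * lnq q b := by
  unfold lnq
  split_ifs with hq
  · rw [Real.log_mul ha.ne' hb.ne', hq]
    ring
  · rw [Real.mul_rpow ha.le hb.le]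
    field_simp [sub_ne_zero.2 hq]
    ring

theorem mul_mul_lnq_mul (q : ℝ) {a b : ℝ} (ha : 0 ≤ a) (hb : 0 ≤ b) :
    a * b * lnq q (a * b) =
      a * lnq q a * b + a * (b * lnq q b) + (q - 1) * (a * lnq q a * (b * lnq q b)) := by
  rcases ha.eq_or_lt with rfl | ha
  · simp
  rcases hb.eq_or_lt with rfl | hb
  · simp
  rw [lnq_mul q ha hb]
  ring

theorem neg_mul_lnq_nonneg (q : ℝ) {x : ℝ} (hx0 : 0 ≤ x) (hx1 : x ≤ 1) :
    0 ≤ -(x * lnq q x) := by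
  rcases hx0.eq_or_lt with rfl | hx0
  · simp
  rcases hx1.eq_or_lt with rfl | hx1
  · simp [lnq_one]
  exact (neg_pos.2 (mul_neg_of_pos_of_neg hx0 (lnq_neg hx0 hx1))).le

namespace Matrix.IsHermitian

open Polynomial

variable {𝕜 n m : Type*} [RCLike 𝕜] [Fintype n] [DecidableEq n] [Fintype m] [DecidableEq m]
  {A : Matrix n n 𝕜} {B : Matrix m m 𝕜}

theorem sum_eigenvalues_eq_of_charpoly_eq {ι : Type*} [Fintype ι] (hA : A.IsHermitian)
    (d : ι → ℝ) (h : A.charpoly = ∏ i, (X - C (d i : 𝕜))) (f : ℝ → ℝ) :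
    ∑ i, f (hA.eigenvalues i) = ∑ i, f (d i) := by
  have hroots : Multiset.map ((RCLike.ofReal : ℝ → 𝕜) ∘ hA.eigenvalues) Finset.univ.val =
      Multiset.map (RCLike.ofReal ∘ d) Finset.univ.val := by
    rw [← hA.roots_charpoly_eq_eigenvalues, h, roots_prod]
    · simp
    · simp [Finset.prod_ne_zero_iff, X_sub_C_ne_zero]
  have := congrArg (fun s => (s.map (f ∘ RCLike.re)).sum) hroots
  simp only [Multiset.map_map, Function.comp_def, RCLike.ofReal_re] at this
  exact this

theorem charpoly_kronecker (hA : A.IsHermitian) (hB : B.IsHermitian) :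
    (A ⊗ₖ B).charpoly =
      ∏ p : n × m, (X - C ((hA.eigenvalues p.1 * hB.eigenvalues p.2 : ℝ) : 𝕜)) := by
  -- `A ⊗ B = (U ⊗ V) (D ⊗ E) (U ⊗ V)⋆`, and `charpoly_mul_comm` cancels the unitary conjugation
  conv_lhs => rw [hA.spectral_theorem, hB.spectral_theorem, Unitary.conjStarAlgAut_apply,
    Unitary.conjStarAlgAut_apply, mul_kronecker_mul, mul_kronecker_mul, charpoly_mul_comm,
    ← mul_assoc, ← mul_kronecker_mul, Unitary.coe_star_mul_self, Unitary.coe_star_mul_self,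
    one_kronecker_one, one_mul, diagonal_kronecker_diagonal, charpoly_diagonal]
  simp

theorem sum_eigenvalues_kronecker (hA : A.IsHermitian) (hB : B.IsHermitian)
    (hAB : (A ⊗ₖ B).IsHermitian) (f : ℝ → ℝ) :
    ∑ p, f (hAB.eigenvalues p) = ∑ i, ∑ j, f (hA.eigenvalues i * hB.eigenvalues j) := by
  rw [hAB.sum_eigenvalues_eq_of_charpoly_eq _ (hA.charpoly_kronecker hB), Fintype.sum_prod_type]

theorem sum_eigenvalues_eq_one (hA : A.IsHermitian) (htr : A.trace = 1) :
    ∑ i, hA.eigenvalues i = 1 := by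
  have h := hA.trace_eq_sum_eigenvalues
  rw [htr] at h
  exact_mod_cast h.symm

theorem exists_eigenvalues_eq_zero_of_rank_eq_one (hA : A.IsHermitian) (hrank : A.rank = 1) :
    ∃ i, ∀ j ≠ i, hA.eigenvalues j = 0 := by
  have hcard : Fintype.card {i // hA.eigenvalues i ≠ 0} = 1 := by
    rw [← hA.rank_eq_card_non_zero_eigs, hrank]
  obtain ⟨⟨i, _⟩, huniq⟩ := Fintype.card_eq_one_iff.mp hcard
  exact ⟨i, fun j hj => by_contra fun h => hj (congrArg Subtype.val (huniq ⟨j, h⟩))⟩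

theorem exists_ne_eigenvalues_ne_zero_of_two_le_rank (hA : A.IsHermitian) (hrank : 2 ≤ A.rank) :
    ∃ i j, i ≠ j ∧ hA.eigenvalues i ≠ 0 ∧ hA.eigenvalues j ≠ 0 := by
  have hcard : 1 < Fintype.card {i // hA.eigenvalues i ≠ 0} := by
    rw [← hA.rank_eq_card_non_zero_eigs]
    omega
  obtain ⟨⟨i, hi⟩, ⟨j, hj⟩, hij⟩ := Fintype.exists_pair_of_one_lt_card hcard
  exact ⟨i, j, fun h => hij (Subtype.ext h), hi, hj⟩

end Matrix.IsHermitian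

section PartialTrace

variable {ι1 ι2 : Type*} [Fintype ι1]

theorem ptraceFst_eq_sum_submatrix (A : Matrix (ι1 × ι2) (ι1 × ι2) ℂ) :
    ptraceFst A = ∑ i, A.submatrix (Prod.mk i) (Prod.mk i) := by
  ext k l
  simp [ptraceFst, Matrix.sum_apply]

theorem Matrix.PosSemidef.ptraceFst {A : Matrix (ι1 × ι2) (ι1 × ι2) ℂ} (hA : A.PosSemidef) :
    (ptraceFst A).PosSemidef := by
  rw [ptraceFst_eq_sum_submatrix]
  exact posSemidef_sum _ fun i _ => hA.submatrix _

theorem trace_ptraceFst [Fintype ι2] (A : Matrix (ι1 × ι2) (ι1 × ι2) ℂ) :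
    (ptraceFst A).trace = A.trace := by
  simp only [Matrix.trace, Matrix.diag, ptraceFst, Fintype.sum_prod_type]
  exact Finset.sum_comm

end PartialTrace

section DensityMatrix

variable {n m : Type*} [Fintype n] [DecidableEq n] [Fintype m] [DecidableEq m]
  {A : Matrix n n ℂ} {B : Matrix m m ℂ}

theorem tsallisEntropy_kronecker (q : ℝ) (hA : A.PosSemidef) (htrA : A.trace = 1)
    (hB : B.PosSemidef) (htrB : B.trace = 1) (hAB : (A ⊗ₖ B).IsHermitian) :
    tsallisEntropy q hAB = tsallisEntropy q hA.1 + tsallisEntropy q hB.1 +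
      (1 - q) * tsallisEntropy q hA.1 * tsallisEntropy q hB.1 := by
  have hsumA := hA.1.sum_eigenvalues_eq_one htrA
  have hsumB := hB.1.sum_eigenvalues_eq_one htrB
  simp only [tsallisEntropy]
  rw [hA.1.sum_eigenvalues_kronecker hB.1 hAB fun x => x * lnq q x]
  simp only [mul_mul_lnq_mul q (hA.eigenvalues_nonneg _) (hB.eigenvalues_nonneg _),
    Finset.sum_add_distrib, ← Finset.mul_sum, ← Finset.sum_mul, hsumA, hsumB]
  ring

theorem tsallisEntropy_eq_zero_of_rank_eq_one (q : ℝ) (hA : A.PosSemidef) (htr : A.trace = 1)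
    (hrank : A.rank = 1) : tsallisEntropy q hA.1 = 0 := by
  obtain ⟨i, hzero⟩ := hA.1.exists_eigenvalues_eq_zero_of_rank_eq_one hrank
  have hone : hA.1.eigenvalues i = 1 := by
    rw [← hA.1.sum_eigenvalues_eq_one htr,
      Finset.sum_eq_single i (fun j _ hj => hzero j hj) (by simp)]
  rw [tsallisEntropy, Finset.sum_eq_single i (fun j _ hj => by simp [hzero j hj]) (by simp),
    hone, lnq_one, mul_zero, neg_zero]

theorem tsallisEntropy_pos_of_two_le_rank (q : ℝ) (hA : A.PosSemidef) (htr : A.trace = 1)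
    (hrank : 2 ≤ A.rank) : 0 < tsallisEntropy q hA.1 := by
  set e := hA.1.eigenvalues
  have hnonneg : ∀ i, 0 ≤ e i := hA.eigenvalues_nonneg
  have hsum : ∑ i, e i = 1 := hA.1.sum_eigenvalues_eq_one htr
  have hle : ∀ i, e i ≤ 1 := fun i =>
    hsum ▸ Finset.single_le_sum (fun j _ => hnonneg j) (Finset.mem_univ i)
  obtain ⟨i, j, hij, hi, hj⟩ := hA.1.exists_ne_eigenvalues_ne_zero_of_two_le_rank hrank
  have hi_pos : 0 < e i := (hnonneg i).lt_of_ne' hi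
  have hi_lt : e i < 1 := by
    have hpair : e i + e j ≤ ∑ k, e k := by
      rw [← Finset.sum_pair hij]
      exact Finset.sum_le_sum_of_subset_of_nonneg (Finset.subset_univ _) fun k _ _ => hnonneg k
    linarith [(hnonneg j).lt_of_ne' hj]
  rw [tsallisEntropy, ← Finset.sum_neg_distrib]
  exact Finset.sum_pos' (fun k _ => neg_mul_lnq_nonneg q (hnonneg k) (hle k))
    ⟨i, Finset.mem_univ _, neg_pos.2 (mul_neg_of_pos_of_neg hi_pos (lnq_neg hi_pos hi_lt))⟩

end DensityMatrix

/-- If `ρ_12` is an entangled pure state (rank one, with `S_q(ρ_2) > 0`) and `ρ_3` has rank at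
least 2, then for `ρ_123 = ρ_12 ⊗ ρ_3` the strong subadditivity of the Tsallis entropy fails
strictly for every `q > 1`.  Here `ρ_2 = Tr_1 ρ_12` and `ρ_23 = ρ_2 ⊗ ρ_3`. -/
theorem tsallis_ssa_fails_entangled_product (q : ℝ) (hq : 1 < q) {d1 d2 d3 : ℕ}
    {ρ12 : Matrix (Fin d1 × Fin d2) (Fin d1 × Fin d2) ℂ}
    {ρ3 : Matrix (Fin d3) (Fin d3) ℂ}
    (h12 : ρ12.PosSemidef) (htr12 : ρ12.trace = 1) (hpure : ρ12.rank = 1)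
    (h3 : ρ3.PosSemidef) (htr3 : ρ3.trace = 1) (hrank3 : 2 ≤ ρ3.rank)
    (h2 : (ptraceFst ρ12).IsHermitian) (hent : 0 < tsallisEntropy q h2)
    (h123 : (ρ12 ⊗ₖ ρ3).IsHermitian) (h23 : ((ptraceFst ρ12) ⊗ₖ ρ3).IsHermitian) :
    tsallisEntropy q h123 + tsallisEntropy q h2 >
      tsallisEntropy q h12.1 + tsallisEntropy q h23 := by
  have htr2 : (ptraceFst ρ12).trace = 1 := (trace_ptraceFst ρ12).trans htr12
  have hS12 : tsallisEntropy q h12.1 = 0 :=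
    tsallisEntropy_eq_zero_of_rank_eq_one q h12 htr12 hpure
  have hS3 : 0 < tsallisEntropy q h3.1 := tsallisEntropy_pos_of_two_le_rank q h3 htr3 hrank3
  rw [tsallisEntropy_kronecker q h12 htr12 h3 htr3 h123,
    tsallisEntropy_kronecker q h12.ptraceFst htr2 h3 htr3 h23, hS12]
  linarith [mul_pos (mul_pos (sub_pos.2 hq) hent) hS3]
end

section
/- Let q ≥ 1 and let (p_{jkl}) be a finite classical joint probability distribution with marginals p_{jk} = Σ_l p_{jkl}, p_{kl} = Σ_j p_{jkl}, p_k = Σ_{j,l} p_{jkl}. Then the Tsallis entropies satisfy the strong subadditivity inequality S_q(p_{jkl}) + S_q(p_k) ≤ S_q(p_{jk}) + S_q(p_{kl}), where S_q(p) = -Σ p_i ln_q(p_i). -/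
open Finset Real

theorem ConvexOn.perspective_sum_le {ι : Type*} {s : Finset ι} {φ : ℝ → ℝ}
    (hφ : ConvexOn ℝ (Set.Ici 0) φ) {w f : ι → ℝ} (hw : ∀ i ∈ s, 0 ≤ w i)
    (hf : ∀ i ∈ s, 0 ≤ f i) (hfw : ∀ i ∈ s, w i = 0 → f i = 0) :
    (∑ i ∈ s, w i) * φ ((∑ i ∈ s, f i) / ∑ i ∈ s, w i) ≤ ∑ i ∈ s, w i * φ (f i / w i) := by
  set W := ∑ i ∈ s, w i
  rcases (show 0 ≤ W from sum_nonneg hw).eq_or_lt with hW | hW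
  · have hw0 : ∀ i ∈ s, w i = 0 := (sum_eq_zero_iff_of_nonneg hw).1 hW.symm
    rw [← hW, zero_mul]
    exact (sum_eq_zero fun i hi => by rw [hw0 i hi, zero_mul]).ge
  · have hmean : ∑ i ∈ s, (w i / W) • (f i / w i) = (∑ i ∈ s, f i) / W := by
      rw [sum_div]
      refine sum_congr rfl fun i hi => ?_
      rw [smul_eq_mul, div_mul_eq_mul_div, mul_div_cancel_of_imp' (hfw i hi)]
    have hjensen := hφ.map_sum_le (fun i hi => div_nonneg (hw i hi) hW.le)
      (by rw [← sum_div, div_self hW.ne']) (fun i hi => Set.mem_Ici.2 (div_nonneg (hf i hi) (hw i hi)))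
    rw [hmean] at hjensen
    calc W * φ ((∑ i ∈ s, f i) / W) ≤ W * ∑ i ∈ s, (w i / W) • φ (f i / w i) := by gcongr
      _ = ∑ i ∈ s, w i * φ (f i / w i) := by
        rw [mul_sum]
        refine sum_congr rfl fun i _ => ?_
        rw [smul_eq_mul, ← mul_assoc, mul_div_cancel₀ _ hW.ne']

theorem rpow_sub_one_mul_self {x q : ℝ} (hx : 0 ≤ x) (hq : q ≠ 0) : x ^ (q - 1) * x = x ^ q := by
  rw [← rpow_add_one' hx (by simpa using hq), sub_add_cancel]

theorem rpow_mul_div_rpow {x y q : ℝ} (hx : 0 ≤ x) (hy : 0 ≤ y) (hxy : x = 0 → y = 0) :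
    x ^ q * (y / x) ^ q = y ^ q := by
  rw [← mul_rpow hx (div_nonneg hy hx), mul_div_cancel_of_imp' hxy]

theorem mul_div_mul_log_div {x y : ℝ} (hxy : x = 0 → y = 0) :
    x * (y / x * log (y / x)) = y * log y - y * log x := by
  rcases eq_or_ne x 0 with rfl | hx
  · simp [hxy rfl]
  rcases eq_or_ne y 0 with rfl | hy
  · simp
  rw [← mul_assoc, mul_div_cancel₀ _ hx, log_div hy hx, mul_sub]

theorem sum_rpow_le_one {ι : Type*} {s : Finset ι} {x : ι → ℝ} {q : ℝ} (hq : 1 ≤ q)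
    (hx : ∀ i ∈ s, 0 ≤ x i) (hsum : ∑ i ∈ s, x i ≤ 1) : ∑ i ∈ s, x i ^ q ≤ 1 :=
  calc ∑ i ∈ s, x i ^ q ≤ ∑ i ∈ s, x i := sum_le_sum fun i hi =>
        rpow_le_self_of_le_one (hx i hi) ((single_le_sum hx hi).trans hsum) hq
    _ ≤ 1 := hsum

theorem rpow_sum_le_rpow_sum_mul_sum_mul_div_rpow {ι : Type*} {s : Finset ι} {w f : ι → ℝ}
    {q : ℝ} (hq : 1 ≤ q) (hw : ∀ i ∈ s, 0 ≤ w i) (hf : ∀ i ∈ s, 0 ≤ f i)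
    (hfw : ∀ i ∈ s, w i = 0 → f i = 0) :
    (∑ i ∈ s, f i) ^ q ≤ (∑ i ∈ s, w i) ^ (q - 1) * ∑ i ∈ s, w i * (f i / w i) ^ q := by
  have hW : 0 ≤ ∑ i ∈ s, w i := sum_nonneg hw
  have hFW : ∑ i ∈ s, w i = 0 → ∑ i ∈ s, f i = 0 := fun h =>
    sum_eq_zero fun i hi => hfw i hi ((sum_eq_zero_iff_of_nonneg hw).1 h i hi)
  calc (∑ i ∈ s, f i) ^ q
      = (∑ i ∈ s, w i) ^ (q - 1) * ((∑ i ∈ s, w i) * ((∑ i ∈ s, f i) / ∑ i ∈ s, w i) ^ q) := by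
        rw [← mul_assoc, rpow_sub_one_mul_self hW (by positivity),
          rpow_mul_div_rpow hW (sum_nonneg hf) hFW]
    _ ≤ (∑ i ∈ s, w i) ^ (q - 1) * ∑ i ∈ s, w i * (f i / w i) ^ q := by
        gcongr
        exact (convexOn_rpow hq).perspective_sum_le hw hf hfw

section Matrix

variable {J L : Type*} [Fintype J] [Fintype L] {a : J → L → ℝ}

omit [Fintype J] in
theorem eq_zero_of_rowSum_eq_zero (ha : ∀ j l, 0 ≤ a j l) {j : J} (h : ∑ l, a j l = 0) (l : L) :
    a j l = 0 :=
  (sum_eq_zero_iff_of_nonneg fun l _ => ha j l).1 h l (mem_univ l)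

theorem sum_rowSum_rpow_add_sum_colSum_rpow_le {q : ℝ} (hq : 1 ≤ q) (ha : ∀ j l, 0 ≤ a j l) :
    ∑ j, (∑ l, a j l) ^ q + ∑ l, (∑ j, a j l) ^ q ≤
      (∑ j, ∑ l, a j l) ^ q + ∑ j, ∑ l, a j l ^ q := by
  have hq0 : q ≠ 0 := by positivity
  set R : J → ℝ := fun j => ∑ l, a j l
  set T := ∑ j, R j
  have hR : ∀ j, 0 ≤ R j := fun j => sum_nonneg fun l _ => ha j l
  have hT : 0 ≤ T := sum_nonneg fun j _ => hR j
  have hzero : ∀ j l, R j = 0 → a j l = 0 := fun j l h => eq_zero_of_rowSum_eq_zero ha h l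
  have hRT : ∀ j, R j ≤ T := fun j => single_le_sum (fun j _ => hR j) (mem_univ j)
  set ρ : J → ℝ := fun j => ∑ l, (a j l / R j) ^ q
  have hρ : ∀ j, ρ j ≤ 1 := fun j => sum_rpow_le_one hq (fun l _ => div_nonneg (ha j l) (hR j))
    (by rw [← sum_div]; exact div_self_le_one _)
  have hrowSum : ∀ j, ∑ l, a j l ^ q = R j ^ q * ρ j := fun j => by
    rw [mul_sum]
    exact sum_congr rfl fun l _ => (rpow_mul_div_rpow (hR j) (ha j l) (hzero j l)).symm
  have hrow : ∀ j, R j ^ q + T ^ (q - 1) * (R j * ρ j) ≤ T ^ (q - 1) * R j + R j ^ q * ρ j := by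
    intro j
    have hRq : R j ^ q ≤ T ^ (q - 1) * R j := by
      rw [← rpow_sub_one_mul_self (hR j) hq0]
      exact mul_le_mul_of_nonneg_right (rpow_le_rpow (hR j) (hRT j) (by linarith)) (hR j)
    linear_combination mul_nonneg (sub_nonneg.2 hRq) (sub_nonneg.2 (hρ j))
  calc ∑ j, R j ^ q + ∑ l, (∑ j, a j l) ^ q
      ≤ ∑ j, R j ^ q + ∑ l, T ^ (q - 1) * ∑ j, R j * (a j l / R j) ^ q := by
        gcongr with l
        exact rpow_sum_le_rpow_sum_mul_sum_mul_div_rpow hq (fun j _ => hR j) (fun j _ => ha j l)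
          fun j _ => hzero j l
    _ = ∑ j, (R j ^ q + T ^ (q - 1) * (R j * ρ j)) := by
        simp only [← mul_sum, sum_add_distrib, ρ]
        rw [sum_comm]
        simp only [mul_sum]
    _ ≤ ∑ j, (T ^ (q - 1) * R j + R j ^ q * ρ j) := sum_le_sum fun j _ => hrow j
    _ = T ^ q + ∑ j, ∑ l, a j l ^ q := by
        rw [sum_add_distrib, ← mul_sum, rpow_sub_one_mul_self hT hq0]
        simp only [hrowSum]

theorem sum_rowSum_mul_log_add_sum_colSum_mul_log_le (ha : ∀ j l, 0 ≤ a j l) :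
    ∑ j, (∑ l, a j l) * log (∑ l, a j l) + ∑ l, (∑ j, a j l) * log (∑ j, a j l) ≤
      ∑ j, ∑ l, a j l * log (a j l) + (∑ j, ∑ l, a j l) * log (∑ j, ∑ l, a j l) := by
  set R : J → ℝ := fun j => ∑ l, a j l
  set T := ∑ j, R j
  have hR : ∀ j, 0 ≤ R j := fun j => sum_nonneg fun l _ => ha j l
  have hzero : ∀ j l, R j = 0 → a j l = 0 := fun j l h => eq_zero_of_rowSum_eq_zero ha h l
  have hCT : ∀ l, T = 0 → ∑ j, a j l = 0 := fun l h => le_antisymm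
    (h ▸ sum_le_sum fun j _ => single_le_sum (fun l _ => ha j l) (mem_univ l))
    (sum_nonneg fun j _ => ha j l)
  have hcol : ∀ l, (∑ j, a j l) * log (∑ j, a j l) - (∑ j, a j l) * log T ≤
      ∑ j, (a j l * log (a j l) - a j l * log (R j)) := fun l => by
    have h := convexOn_mul_log.perspective_sum_le (s := univ) (fun j _ => hR j) (fun j _ => ha j l)
      fun j _ => hzero j l
    rwa [mul_div_mul_log_div (hCT l), sum_congr rfl fun j _ => mul_div_mul_log_div (hzero j l)] at h
  have hsum := sum_le_sum fun l (_ : l ∈ univ) => hcol l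
  simp only [sum_sub_distrib, ← sum_mul] at hsum
  have hT : ∑ l, ∑ j, a j l = T := sum_comm
  have hentries : ∑ l, ∑ j, a j l * log (a j l) = ∑ j, ∑ l, a j l * log (a j l) := sum_comm
  have hrows : ∑ l, ∑ j, a j l * log (R j) = ∑ j, (∑ l, a j l) * log (∑ l, a j l) := by
    rw [sum_comm]
    simp only [← sum_mul, R]
  rw [hT, hentries, hrows] at hsum
  linarith

end Matrix

theorem mul_lnq_of_one_lt {q x : ℝ} (hq : 1 < q) (hx : 0 ≤ x) :
    x * lnq q x = (x ^ q - x) / (q - 1) := by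
  rw [lnq, if_neg hq.ne', mul_div_assoc', mul_sub, mul_one, mul_comm x,
    rpow_sub_one_mul_self hx (by positivity)]

theorem sum_rowSum_mul_lnq_add_sum_colSum_mul_lnq_le {J L : Type*} [Fintype J] [Fintype L]
    {a : J → L → ℝ} {q : ℝ} (hq : 1 ≤ q) (ha : ∀ j l, 0 ≤ a j l) :
    ∑ j, (∑ l, a j l) * lnq q (∑ l, a j l) + ∑ l, (∑ j, a j l) * lnq q (∑ j, a j l) ≤
      ∑ j, ∑ l, a j l * lnq q (a j l) + (∑ j, ∑ l, a j l) * lnq q (∑ j, ∑ l, a j l) := by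
  rcases hq.eq_or_lt with rfl | hq1
  · simpa only [lnq, if_pos] using sum_rowSum_mul_log_add_sum_colSum_mul_log_le ha
  have hR : ∀ j, 0 ≤ ∑ l, a j l := fun j => sum_nonneg fun l _ => ha j l
  have hC : ∀ l, 0 ≤ ∑ j, a j l := fun l => sum_nonneg fun j _ => ha j l
  simp only [mul_lnq_of_one_lt hq1, ha, hR, hC, sum_nonneg fun j _ => hR j, ← sum_div, ← add_div]
  rw [div_le_div_iff_of_pos_right (sub_pos.2 hq1)]
  simp only [sum_sub_distrib]
  have hcomm : ∑ l, ∑ j, a j l = ∑ j, ∑ l, a j l := sum_comm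
  linarith [sum_rowSum_rpow_add_sum_colSum_rpow_le hq ha]

theorem tsallis_classical_ssa_general (q : ℝ) (hq : 1 ≤ q)
    {J K L : Type*} [Fintype J] [Fintype K] [Fintype L]
    (p : J → K → L → ℝ) (hp : ∀ j k l, 0 ≤ p j k l) :
    (-∑ j, ∑ k, ∑ l, p j k l * lnq q (p j k l)) +
      (-∑ k, (∑ j, ∑ l, p j k l) * lnq q (∑ j, ∑ l, p j k l)) ≤
    (-∑ j, ∑ k, (∑ l, p j k l) * lnq q (∑ l, p j k l)) +
      (-∑ k, ∑ l, (∑ j, p j k l) * lnq q (∑ j, p j k l)) := by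
  have hslice := sum_le_sum fun k (_ : k ∈ univ) =>
    sum_rowSum_mul_lnq_add_sum_colSum_mul_lnq_le hq (a := fun j l => p j k l) fun j l => hp j k l
  simp only [sum_add_distrib] at hslice
  rw [sum_comm (s := univ) (t := univ) (f := fun j k => ∑ l, p j k l * lnq q (p j k l)),
    sum_comm (s := univ) (t := univ) (f := fun j k => (∑ l, p j k l) * lnq q (∑ l, p j k l))]
  linarith

/-- Strong subadditivity of the classical Tsallis entropy for `q ≥ 1`. -/
theorem tsallis_classical_ssa (q : ℝ) (hq : 1 ≤ q)
    {J K L : Type*} [Fintype J] [Fintype K] [Fintype L]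
    (p : J → K → L → ℝ) (hp : ∀ j k l, 0 ≤ p j k l)
    (hsum : ∑ j, ∑ k, ∑ l, p j k l = 1) :
    (-∑ j, ∑ k, ∑ l, p j k l * lnq q (p j k l)) +
      (-∑ k, (∑ j, ∑ l, p j k l) * lnq q (∑ j, ∑ l, p j k l)) ≤
    (-∑ j, ∑ k, (∑ l, p j k l) * lnq q (∑ l, p j k l)) +
      (-∑ k, ∑ l, (∑ j, p j k l) * lnq q (∑ j, p j k l)) :=
  tsallis_classical_ssa_general q hq p hp
end

section
/- Let A be a positive definite matrix in M_m(C) ⊗ M_n(C) with A_1 = Tr_2(A) invertible. Then the linear map U : M_m(C) → M_m(C) ⊗ M_n(C) defined by U(X) = (X A_1^{-1/2} ⊗ I_2) A^{1/2} is an isometry with respect to the Hilbert–Schmidt inner products. -/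
/-!
With `B = A₁^{-1/2}` and `T = A^{1/2}` Hermitian, `U(X)ᴴ U(Y) = T ((XB)ᴴ(YB) ⊗ I) T`. By cyclicity
its trace is `Tr(((XB)ᴴ(YB) ⊗ I) A)`, and tracing out the second factor turns this into
`Tr((XB)ᴴ(YB) A₁) = Tr(XᴴY · B A₁ B) = Tr(XᴴY)`.
-/

open Matrix Kronecker ComplexOrder

/-- Partial trace over the second tensor factor. -/
noncomputable def ptrace2 {m n : Type*} [Fintype n] (A : Matrix (m × n) (m × n) ℂ) :
    Matrix m m ℂ := fun i j => ∑ k, A (i, k) (j, k)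

/-- The square root of a positive semidefinite matrix (as defined in the older Mathlib). -/
noncomputable def Matrix.PosSemidef.sqrt {n 𝕜 : Type*} [Fintype n] [RCLike 𝕜] [DecidableEq n]
    {A : Matrix n n 𝕜} (hA : A.PosSemidef) : Matrix n n 𝕜 :=
  (hA.1.eigenvectorUnitary : Matrix n n 𝕜) * diagonal ((↑) ∘ (√·) ∘ hA.1.eigenvalues) *
    (star (hA.1.eigenvectorUnitary : Matrix n n 𝕜))

/-- The map `U : X ↦ (X A₁^{-1/2} ⊗ I₂) A^{1/2}`, where `A₁ = Tr₂ A`. -/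
noncomputable def mapU {m n : ℕ} (A : Matrix (Fin m × Fin n) (Fin m × Fin n) ℂ)
    (hA : A.PosDef) (hA1 : (ptrace2 A).PosDef) (X : Matrix (Fin m) (Fin m) ℂ) :
    Matrix (Fin m × Fin n) (Fin m × Fin n) ℂ :=
  ((X * (hA1.posSemidef.sqrt)⁻¹) ⊗ₖ (1 : Matrix (Fin n) (Fin n) ℂ)) * hA.posSemidef.sqrt

namespace Matrix

section Sqrt

variable {n 𝕜 : Type*} [Fintype n] [DecidableEq n] [RCLike 𝕜] {A : Matrix n n 𝕜}

theorem PosSemidef.sqrt_isHermitian (hA : A.PosSemidef) : hA.sqrt.IsHermitian := by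
  rw [PosSemidef.sqrt, IsHermitian, conjTranspose_mul, conjTranspose_mul, diagonal_conjTranspose,
    ← star_eq_conjTranspose, star_star, mul_assoc]
  congr 3
  funext i
  simp

theorem PosSemidef.sqrt_mul_self (hA : A.PosSemidef) : hA.sqrt * hA.sqrt = A := by
  set U : Matrix n n 𝕜 := ↑hA.1.eigenvectorUnitary
  have hUU : star U * U = 1 := Unitary.coe_star_mul_self _
  conv_rhs => rw [hA.1.spectral_theorem, Unitary.conjStarAlgAut_apply]
  calc hA.sqrt * hA.sqrt
      = U * diagonal ((↑) ∘ (√·) ∘ hA.1.eigenvalues) * (star U * U) *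
          diagonal ((↑) ∘ (√·) ∘ hA.1.eigenvalues) * star U := by
        simp only [PosSemidef.sqrt, U, mul_assoc]
    _ = U * diagonal ((↑) ∘ hA.1.eigenvalues) * star U := by
        rw [hUU, mul_one, mul_assoc U, diagonal_mul_diagonal]
        congr 3
        funext i
        simp only [Function.comp_apply, ← RCLike.ofReal_mul,
          Real.mul_self_sqrt (hA.eigenvalues_nonneg i)]

end Sqrt

theorem nonsing_inv_mul_mul_nonsing_inv_of_mul_self_eq {n R : Type*} [Fintype n] [DecidableEq n]
    [CommRing R] {S M : Matrix n n R} (hSM : S * S = M) (hM : IsUnit M) :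
    S⁻¹ * M * S⁻¹ = 1 := by
  have hS : IsUnit S.det := by
    refine isUnit_of_mul_isUnit_left (y := S.det) ?_
    rw [← det_mul, hSM]
    exact (isUnit_iff_isUnit_det M).mp hM
  rw [← hSM, ← mul_assoc, nonsing_inv_mul _ hS, one_mul, mul_nonsing_inv _ hS]

end Matrix

section PartialTrace

variable {m n : Type*} [Fintype m] [Fintype n] [DecidableEq n]

theorem trace_kronecker_one_mul (M : Matrix m m ℂ) (A : Matrix (m × n) (m × n) ℂ) :
    ((M ⊗ₖ (1 : Matrix n n ℂ)) * A).trace = (M * ptrace2 A).trace := by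
  simp only [trace, diag_apply, mul_apply, ptrace2, Fintype.sum_prod_type, kroneckerMap_apply,
    one_apply, mul_ite, mul_one, mul_zero, ite_mul, zero_mul, Finset.sum_ite_eq,
    Finset.mem_univ, if_true, Finset.mul_sum]
  exact Finset.sum_congr rfl fun i _ => Finset.sum_comm

theorem trace_conjTranspose_kronecker_one_mul_mul_kronecker_one_mul {T : Matrix (m × n) (m × n) ℂ}
    (hT : T.IsHermitian) (M N : Matrix m m ℂ) :
    (((M ⊗ₖ (1 : Matrix n n ℂ)) * T)ᴴ * ((N ⊗ₖ (1 : Matrix n n ℂ)) * T)).trace =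
      (Mᴴ * N * ptrace2 (T * T)).trace := by
  calc (((M ⊗ₖ (1 : Matrix n n ℂ)) * T)ᴴ * ((N ⊗ₖ (1 : Matrix n n ℂ)) * T)).trace
      = (T * ((Mᴴ * N) ⊗ₖ (1 : Matrix n n ℂ)) * T).trace := by
        rw [conjTranspose_mul, conjTranspose_kronecker, conjTranspose_one, hT.eq]
        simp only [mul_assoc]
        rw [← mul_assoc (Mᴴ ⊗ₖ 1), ← mul_kronecker_mul, one_mul]
    _ = ((Mᴴ * N) ⊗ₖ (1 : Matrix n n ℂ) * (T * T)).trace := by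
        rw [mul_assoc, trace_mul_comm, mul_assoc]
    _ = (Mᴴ * N * ptrace2 (T * T)).trace := trace_kronecker_one_mul _ _

end PartialTrace

/-- `U : X ↦ (X A₁^{-1/2} ⊗ I₂) A^{1/2}` is an isometry for the Hilbert–Schmidt inner
products. -/
theorem mapU_isometry {m n : ℕ} (A : Matrix (Fin m × Fin n) (Fin m × Fin n) ℂ)
    (hA : A.PosDef) (hA1 : (ptrace2 A).PosDef) :
    ∀ X Y : Matrix (Fin m) (Fin m) ℂ,
      ((mapU A hA hA1 X)ᴴ * mapU A hA hA1 Y).trace = (Xᴴ * Y).trace := by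
  intro X Y
  set B := (hA1.posSemidef.sqrt)⁻¹
  have hB : Bᴴ = B := by rw [conjTranspose_nonsing_inv, hA1.posSemidef.sqrt_isHermitian.eq]
  have hBA1B : B * ptrace2 A * B = 1 :=
    nonsing_inv_mul_mul_nonsing_inv_of_mul_self_eq hA1.posSemidef.sqrt_mul_self hA1.isUnit
  calc ((mapU A hA hA1 X)ᴴ * mapU A hA hA1 Y).trace
      = ((X * B)ᴴ * (Y * B) * ptrace2 A).trace := by
        rw [mapU, mapU, trace_conjTranspose_kronecker_one_mul_mul_kronecker_one_mul
          hA.posSemidef.sqrt_isHermitian, hA.posSemidef.sqrt_mul_self]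
    _ = (Xᴴ * Y * (B * ptrace2 A * B)).trace := by
        rw [conjTranspose_mul, hB]
        simp only [mul_assoc]
        rw [trace_mul_comm B]
        simp only [mul_assoc]
    _ = (Xᴴ * Y).trace := by rw [hBA1B, mul_one]
end
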